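/- Let T be the triple intersection form of M_2^{(dP_8)^2}, and for real numbers r_5, r_6, r_7, r_8 set J = r_5 D_5 + r_6 D_6 + r_7 D_7 + r_8 D_8 and Γ_0 = 9D_5 + 3D_6 + 9D_7 + 9D_8. Then the four 'four-cycle volumes' are perfect squares: (1/2)T(D_6,J,J) = (1/2)(r_5 − 3r_6)², (1/2)T(D_7,J,J) = (1/2)(r_5 − r_7)², (1/2)T(D_8,J,J) = (1/2)(r_5 − r_8)², and (1/2)T(Γ_0,J,J) = (3/2)r_5². -/

import Mathlib

/-!
Expanding `T` in the basis `D`, each `T(D a, y, y)` is a quadratic form in the coordinates of `y`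
with coefficients `c a j k`. For `a = 1, 2, 3` its only monomials are `y a ^ 2`, `y 0 * y a` and
`y 0 ^ 2`, with coefficients forming a perfect square; the weights `9, 3, 9, 9` of `Γ₀` make every
monomial of `∑ a, Γ₀ a * T(D a, y, y)` other than `y 0 ^ 2` cancel.
-/

open Finset

theorem Fintype.sum_fin_three_fun {ι M : Type*} [Fintype ι] [AddCommMonoid M]
    (f : (Fin 3 → ι) → M) : ∑ r, f r = ∑ i, ∑ j, ∑ k, f ![i, j, k] := by
  simp only [← (Fin.consEquiv fun _ => ι).sum_comp, Fintype.sum_prod_type, Fintype.sum_unique]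
  rfl

namespace MultilinearMap

variable {R ι : Type*} [CommSemiring R] [Fintype ι] [DecidableEq ι]

theorem apply_eq_sum_pi_single {n : ℕ} (T : MultilinearMap R (fun _ : Fin n => ι → R) R)
    (m : Fin n → ι → R) :
    T m = ∑ r : Fin n → ι, (∏ a, m a (r a)) * T (fun a => Pi.single (r a) 1) := by
  conv_lhs => rw [show m = fun a => ∑ i, m a i • Pi.single i (1 : R) by
    ext a j; simp [Pi.single_apply]]
  simp_rw [T.map_sum, T.map_smul_univ, smul_eq_mul]

theorem apply_fin_three_eq_sum (T : MultilinearMap R (fun _ : Fin 3 => ι → R) R)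
    (x y z : ι → R) :
    T ![x, y, z] = ∑ i, ∑ j, ∑ k,
      x i * y j * z k * T ![Pi.single i 1, Pi.single j 1, Pi.single k 1] := by
  rw [apply_eq_sum_pi_single, Fintype.sum_fin_three_fun]
  refine sum_congr rfl fun i _ => sum_congr rfl fun j _ => sum_congr rfl fun k _ => ?_
  simp only [Fin.prod_univ_three]
  congr! 2
  ext a
  fin_cases a <;> rfl

end MultilinearMap

namespace Stmt16

/-- The real vector space with basis `D₅, D₆, D₇, D₈` (indexed `0, 1, 2, 3`). -/
abbrev V := Fin 4 → ℝ

/-- The basis vector `D_{i+5}` (`i : Fin 4` zero-based: `D 0 = D₅, …, D 3 = D₈`). -/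
def D (i : Fin 4) : V := Pi.single i 1

/-- The triple intersection numbers of `M₂^{(dP₈)²}` on basis triples. -/
def c (i j k : Fin 4) : ℝ :=
  if ({i, j, k} : Multiset (Fin 4)) = {0, 0, 0} then -2
  else if ({i, j, k} : Multiset (Fin 4)) = {1, 1, 1} then 9
  else if ({i, j, k} : Multiset (Fin 4)) = {2, 2, 2} then 1
  else if ({i, j, k} : Multiset (Fin 4)) = {3, 3, 3} then 1
  else if ({i, j, k} : Multiset (Fin 4)) = {0, 0, 1} then 1
  else if ({i, j, k} : Multiset (Fin 4)) = {0, 0, 2} then 1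
  else if ({i, j, k} : Multiset (Fin 4)) = {0, 0, 3} then 1
  else if ({i, j, k} : Multiset (Fin 4)) = {0, 1, 1} then -3
  else if ({i, j, k} : Multiset (Fin 4)) = {0, 2, 2} then -1
  else if ({i, j, k} : Multiset (Fin 4)) = {0, 3, 3} then -1
  else 0

/-- `Γ₀ = 9D₅ + 3D₆ + 9D₇ + 9D₈`. -/
def Γ0 : V := (9 : ℝ) • D 0 + (3 : ℝ) • D 1 + (9 : ℝ) • D 2 + (9 : ℝ) • D 3

section IntersectionForm

variable (T : MultilinearMap ℝ (fun _ : Fin 3 => V) ℝ)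
    (hvals : ∀ i j k : Fin 4, T ![D i, D j, D k] = c i j k)
include hvals

theorem apply_eq_sum_c (x y z : V) :
    T ![x, y, z] = ∑ i, ∑ j, ∑ k, x i * y j * z k * c i j k := by
  rw [T.apply_fin_three_eq_sum]
  refine sum_congr rfl fun i _ => sum_congr rfl fun j _ => sum_congr rfl fun k _ => ?_
  rw [← hvals]
  rfl

theorem apply_D_eq_sum_c (a : Fin 4) (y z : V) :
    T ![D a, y, z] = ∑ j, ∑ k, y j * (z k * c a j k) := by
  rw [apply_eq_sum_c T hvals, Fintype.sum_eq_single a fun i hi => by simp [D, hi]]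
  simp [D, mul_assoc]

theorem apply_eq_sum_apply_D (x y z : V) : T ![x, y, z] = ∑ a, x a * T ![D a, y, z] := by
  rw [apply_eq_sum_c T hvals]
  simp only [apply_D_eq_sum_c T hvals, mul_sum, mul_assoc]

theorem apply_D_zero (y : V) :
    T ![D 0, y, y] =
      -2 * y 0 ^ 2 + 2 * y 0 * (y 1 + y 2 + y 3) - 3 * y 1 ^ 2 - y 2 ^ 2 - y 3 ^ 2 := by
  rw [apply_D_eq_sum_c T hvals]
  simp +decide only [Fin.sum_univ_four, c, if_true, if_false]
  ring

theorem apply_D_one (y : V) : T ![D 1, y, y] = (y 0 - 3 * y 1) ^ 2 := by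
  rw [apply_D_eq_sum_c T hvals]
  simp +decide only [Fin.sum_univ_four, c, if_true, if_false]
  ring

theorem apply_D_two (y : V) : T ![D 2, y, y] = (y 0 - y 2) ^ 2 := by
  rw [apply_D_eq_sum_c T hvals]
  simp +decide only [Fin.sum_univ_four, c, if_true, if_false]
  ring

theorem apply_D_three (y : V) : T ![D 3, y, y] = (y 0 - y 3) ^ 2 := by
  rw [apply_D_eq_sum_c T hvals]
  simp +decide only [Fin.sum_univ_four, c, if_true, if_false]
  ring

theorem apply_Γ0 (y : V) : T ![Γ0, y, y] = 3 * y 0 ^ 2 := by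
  rw [apply_eq_sum_apply_D T hvals, Fin.sum_univ_four, apply_D_zero T hvals,
    apply_D_one T hvals, apply_D_two T hvals, apply_D_three T hvals]
  simp +decide [Γ0, D]
  ring

end IntersectionForm

theorem statement16_general (T : MultilinearMap ℝ (fun _ : Fin 3 => V) ℝ)
    (hvals : ∀ i j k : Fin 4, T ![D i, D j, D k] = c i j k)
    (r5 r6 r7 r8 : ℝ) :
    let J : V := r5 • D 0 + r6 • D 1 + r7 • D 2 + r8 • D 3
    (1 / 2 : ℝ) * T ![D 1, J, J] = (1 / 2) * (r5 - 3 * r6) ^ 2 ∧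
    (1 / 2 : ℝ) * T ![D 2, J, J] = (1 / 2) * (r5 - r7) ^ 2 ∧
    (1 / 2 : ℝ) * T ![D 3, J, J] = (1 / 2) * (r5 - r8) ^ 2 ∧
    (1 / 2 : ℝ) * T ![Γ0, J, J] = (3 / 2) * r5 ^ 2 := by
  intro J
  obtain ⟨h5, h6, h7, h8⟩ : J 0 = r5 ∧ J 1 = r6 ∧ J 2 = r7 ∧ J 3 = r8 := by
    simp [J, D]
  rw [apply_D_one T hvals, apply_D_two T hvals, apply_D_three T hvals, apply_Γ0 T hvals,
    h5, h6, h7, h8]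
  exact ⟨rfl, rfl, rfl, by ring⟩

/-- For the triple intersection form `T` of `M₂^{(dP₈)²}` and
`J = r₅D₅ + r₆D₆ + r₇D₇ + r₈D₈`, the four 'four-cycle volumes' are perfect squares:
`(1/2)T(D₆,J,J) = (1/2)(r₅ − 3r₆)²`, `(1/2)T(D₇,J,J) = (1/2)(r₅ − r₇)²`,
`(1/2)T(D₈,J,J) = (1/2)(r₅ − r₈)²`, and `(1/2)T(Γ₀,J,J) = (3/2)r₅²`. -/
theorem statement16 (T : MultilinearMap ℝ (fun _ : Fin 3 => V) ℝ)
    (hsymm : ∀ x y z : V, T ![x, y, z] = T ![y, x, z] ∧ T ![x, y, z] = T ![x, z, y])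
    (hvals : ∀ i j k : Fin 4, T ![D i, D j, D k] = c i j k)
    (r5 r6 r7 r8 : ℝ) :
    let J : V := r5 • D 0 + r6 • D 1 + r7 • D 2 + r8 • D 3
    (1 / 2 : ℝ) * T ![D 1, J, J] = (1 / 2) * (r5 - 3 * r6) ^ 2 ∧
    (1 / 2 : ℝ) * T ![D 2, J, J] = (1 / 2) * (r5 - r7) ^ 2 ∧
    (1 / 2 : ℝ) * T ![D 3, J, J] = (1 / 2) * (r5 - r8) ^ 2 ∧
    (1 / 2 : ℝ) * T ![Γ0, J, J] = (3 / 2) * r5 ^ 2 :=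
  statement16_general T hvals r5 r6 r7 r8

end Stmt16
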